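/- arXiv:1301.6433 — 3 statements merged into one kernel-verified Lean document; each statement's English description precedes it below -/
import Mathlib

section
/- Let k ≥ 1, let d_1 ≥ d_2 ≥ ... ≥ d_k ≥ 0 be real delays, and let w_1, ..., w_k be natural numbers, not all zero, with m* = max_j w_j. Then D_T(A*) = Σ_{j=1}^k d_j · max{0, w_j − max{w_{j'} : 0 ≤ j' < j}}, where by convention w_0 = 0. -/
/-- The delay of row `i` of a binary matrix `A`: the maximum of `d j` over the
columns `j` where `A i j = 1`, with the empty maximum taken to be `0`. -/
def rowDelay {m k : ℕ} (d : Fin k → ℝ) (A : Fin m → Fin k → Bool) (i : Fin m) : ℝ :=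
  (Finset.univ.filter (fun j => A i j = true)).fold max 0 d

/-- The total delay of a binary matrix `A`: the sum of the row delays. -/
def totalDelay {m k : ℕ} (d : Fin k → ℝ) (A : Fin m → Fin k → Bool) : ℝ :=
  ∑ i, rowDelay d A i

/-- The weight of column `j` of a binary matrix `A`: the number of its 1-entries. -/
def colWeight {m k : ℕ} (A : Fin m → Fin k → Bool) (j : Fin k) : ℕ :=
  (Finset.univ.filter (fun i => A i j = true)).card

/-!
Row `i` of `A*` has a 1 exactly in the columns `j` with `i < w j`; since the delays decrease,
its delay is `d j₀` for the first such column `j₀`. Row `i` has first column `j` exactly when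
`max{w j' : j' < j} ≤ i < w j`, so column `j` is first for `w j - max{w j' : j' < j}` rows
(truncated at `0`). Summing the delays column by column gives the formula.
-/

open Finset

theorem Finset.fold_max_eq_min'_of_antitone {ι α : Type*} [LinearOrder ι] [LinearOrder α]
    {d : ι → α} (hd : Antitone d) {s : Finset ι} (hs : s.Nonempty) {b : α}
    (hb : b ≤ d (s.min' hs)) : s.fold max b d = d (s.min' hs) :=
  le_antisymm
    ((fold_max_le _).2 ⟨hb, fun _ hj ↦ hd (s.min'_le _ hj)⟩)
    ((le_fold_max _).2 (.inr ⟨_, s.min'_mem hs, le_rfl⟩))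

theorem Fin.card_filter_le_val_lt {m a b : ℕ} (hb : b ≤ m) :
    #{i : Fin m | a ≤ (i : ℕ) ∧ (i : ℕ) < b} = b - a := by
  rw [← Nat.card_Ico, ← card_map Fin.valEmbedding]
  congr 1
  ext x
  simp only [mem_map, mem_filter, mem_univ, true_and, Fin.valEmbedding_apply, mem_Ico,
    Fin.exists_iff]
  constructor
  · rintro ⟨x, -, hx, rfl⟩
    exact hx
  · intro hx
    exact ⟨x, by omega, hx, rfl⟩

/-- The matrix `A*` of the statement. -/
def canonicalMatrix {k : ℕ} (w : Fin k → ℕ) : Fin (univ.sup w) → Fin k → Bool :=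
  fun i j ↦ decide (i.val < w j)

section LeadColumn

variable {ι : Type*} [Fintype ι] (w : ι → ℕ)

theorem nonempty_filter_lt_of_lt_sup (i : Fin (univ.sup w)) :
    (univ.filter fun j ↦ (i : ℕ) < w j).Nonempty := by
  obtain ⟨j, -, hj⟩ := Finset.lt_sup_iff.1 i.isLt
  exact ⟨j, mem_filter.2 ⟨mem_univ j, hj⟩⟩

variable [LinearOrder ι]

def leadColumn (i : Fin (univ.sup w)) : ι :=
  (univ.filter fun j ↦ (i : ℕ) < w j).min' (nonempty_filter_lt_of_lt_sup w i)

variable {w}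

theorem lt_apply_leadColumn (i : Fin (univ.sup w)) : (i : ℕ) < w (leadColumn w i) :=
  (mem_filter.1 (min'_mem _ (nonempty_filter_lt_of_lt_sup w i))).2

theorem leadColumn_le {i : Fin (univ.sup w)} {j : ι} (h : (i : ℕ) < w j) : leadColumn w i ≤ j :=
  min'_le _ _ (mem_filter.2 ⟨mem_univ j, h⟩)

theorem leadColumn_eq_iff (i : Fin (univ.sup w)) (j : ι) :
    leadColumn w i = j ↔ ({j' | j' < j} : Finset ι).sup w ≤ i ∧ (i : ℕ) < w j := by
  constructor
  · rintro rfl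
    refine ⟨Finset.sup_le fun j' hj' ↦ ?_, lt_apply_leadColumn i⟩
    by_contra! h
    exact (mem_filter.1 hj').2.not_ge (leadColumn_le h)
  · rintro ⟨hprefix, hj⟩
    refine (leadColumn_le hj).eq_of_not_lt fun hlt ↦ ?_
    have : w (leadColumn w i) ≤ ({j' | j' < j} : Finset ι).sup w :=
      le_sup (mem_filter.2 ⟨mem_univ _, hlt⟩)
    exact (lt_apply_leadColumn i).not_ge (this.trans hprefix)

theorem card_leadColumn_eq (j : ι) :
    #{i | leadColumn w i = j} = w j - ({j' | j' < j} : Finset ι).sup w := by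
  simp_rw [leadColumn_eq_iff]
  exact Fin.card_filter_le_val_lt (le_sup (mem_univ j))

end LeadColumn

theorem rowDelay_canonicalMatrix {k : ℕ} {d : Fin k → ℝ} (hd0 : ∀ j, 0 ≤ d j)
    (hdanti : Antitone d) (w : Fin k → ℕ) (i : Fin (univ.sup w)) :
    rowDelay d (canonicalMatrix w) i = d (leadColumn w i) := by
  simp only [rowDelay, canonicalMatrix, decide_eq_true_eq]
  exact fold_max_eq_min'_of_antitone hdanti _ (hd0 _)

theorem stmt1_general (k : ℕ)
    (d : Fin k → ℝ) (hd0 : ∀ j, 0 ≤ d j) (hdanti : Antitone d)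
    (w : Fin k → ℕ) :
    totalDelay d (fun (i : Fin (Finset.univ.sup w)) (j : Fin k) => decide (i.val < w j))
      = ∑ j : Fin k,
          d j * ((w j - (Finset.univ.filter (fun j' => j' < j)).sup w : ℕ) : ℝ) := by
  calc totalDelay d (canonicalMatrix w)
      = ∑ i, d (leadColumn w i) := sum_congr rfl fun i _ ↦ rowDelay_canonicalMatrix hd0 hdanti w i
    _ = ∑ j, ∑ i with leadColumn w i = j, d j := (sum_fiberwise' _ _ _).symm
    _ = _ := by simp_rw [sum_const, card_leadColumn_eq, nsmul_eq_mul, mul_comm]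

/-- the total delay of the canonical matrix `A*` equals
`∑ j, d j * max{0, w j - max{w j' : j' < j}}` (with the empty max taken as `0`,
i.e. the convention `w 0 = 0`); the truncated natural subtraction realises the
outer `max{0, ·}`. -/
theorem stmt1 (k : ℕ) (hk : 1 ≤ k)
    (d : Fin k → ℝ) (hd0 : ∀ j, 0 ≤ d j) (hdanti : Antitone d)
    (w : Fin k → ℕ) (hw : ∃ j, w j ≠ 0) :
    totalDelay d (fun (i : Fin (Finset.univ.sup w)) (j : Fin k) => decide (i.val < w j))
      = ∑ j : Fin k,
          d j * ((w j - (Finset.univ.filter (fun j' => j' < j)).sup w : ℕ) : ℝ) :=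
  stmt1_general k d hd0 hdanti w
end

section
/- Let m, k ≥ 1, let d_1 ≥ d_2 ≥ ... ≥ d_k ≥ 0 be real delays, and let w_1, ..., w_k be natural numbers, not all zero, with m* = max_j w_j. If A is an m × k binary matrix such that the number of 1-entries in column j is at least w_j for every j ∈ {1,...,k}, then D_T(A) ≥ D_T(A*), where A* is the m* × k matrix with a*_{i,j} = 1 iff i ≤ w_j. Consequently, A* achieves the minimum total delay among all binary assignment matrices (of any number of rows) whose j-th column has at least w_j ones for all j. -/
open Finset

section

variable {m k : ℕ}

lemma fold_max_eq_min' {ι β : Type*} [LinearOrder ι] [LinearOrder β] {d : ι → β} {b : β}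
    (hb : ∀ j, b ≤ d j) (hd : Antitone d) {S : Finset ι} (hS : S.Nonempty) :
    S.fold max b d = d (S.min' hS) :=
  le_antisymm ((fold_max_le _).2 ⟨hb _, fun _ hj => hd (S.min'_le _ hj)⟩)
    ((le_fold_max _).2 (Or.inr ⟨_, S.min'_mem hS, le_rfl⟩))

def extendByZero (d : Fin k → ℝ) (n : ℕ) : ℝ :=
  if h : n < k then d ⟨n, h⟩ else 0

def delayGap (d : Fin k → ℝ) (j : Fin k) : ℝ :=
  extendByZero d j - extendByZero d (j + 1)

lemma delayGap_nonneg {d : Fin k → ℝ} (hd0 : ∀ j, 0 ≤ d j) (hdanti : Antitone d) (j : Fin k) :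
    0 ≤ delayGap d j := by
  rw [delayGap, extendByZero, dif_pos j.isLt, extendByZero]
  split_ifs
  · exact sub_nonneg.2 (hdanti (Fin.le_def.2 (Nat.le_succ _)))
  · simpa using hd0 j

lemma sum_delayGap_Ici (d : Fin k → ℝ) (j₀ : Fin k) : ∑ j ∈ Ici j₀, delayGap d j = d j₀ := by
  have htel := sum_Ico_sub (fun n => -extendByZero d n) (Nat.le_of_lt j₀.isLt)
  rw [← Fin.map_valEmbedding_Ici, sum_map] at htel
  simp only [Fin.valEmbedding_apply, neg_sub_neg] at htel
  simpa [delayGap, extendByZero, j₀.isLt] using htel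

lemma rowDelay_eq_sum_delayGap {d : Fin k → ℝ} (hd0 : ∀ j, 0 ≤ d j) (hdanti : Antitone d)
    (A : Fin m → Fin k → Bool) (i : Fin m) :
    rowDelay d A i = ∑ j with ∃ j' ≤ j, A i j' = true, delayGap d j := by
  rcases (univ.filter fun j => A i j = true).eq_empty_or_nonempty with hS | hS
  · have hrow : ∀ j, A i j = false := by simpa [filter_eq_empty_iff] using hS
    simp [rowDelay, hrow]
  · have hprefix : ({j | ∃ j' ≤ j, A i j' = true} : Finset (Fin k)) = Ici (min' _ hS) := by
      ext j
      simp only [mem_filter, mem_univ, true_and, mem_Ici]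
      refine ⟨fun ⟨j', hj', hA⟩ => (min'_le _ j' (by simpa using hA)).trans hj',
        fun h => ⟨_, h, (mem_filter.1 (min'_mem _ hS)).2⟩⟩
    rw [hprefix, sum_delayGap_Ici, rowDelay, fold_max_eq_min' hd0 hdanti hS]

def prefixCount (A : Fin m → Fin k → Bool) (j : Fin k) : ℕ :=
  #{i | ∃ j' ≤ j, A i j' = true}

lemma totalDelay_eq_sum_prefixCount_mul {d : Fin k → ℝ} (hd0 : ∀ j, 0 ≤ d j)
    (hdanti : Antitone d) (A : Fin m → Fin k → Bool) :
    totalDelay d A = ∑ j, (prefixCount A j : ℝ) * delayGap d j := by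
  simp only [totalDelay, rowDelay_eq_sum_delayGap hd0 hdanti, sum_filter]
  rw [sum_comm]
  refine sum_congr rfl fun j _ => ?_
  rw [← sum_filter, sum_const, prefixCount, nsmul_eq_mul]

lemma colWeight_le_prefixCount (A : Fin m → Fin k → Bool) {j' j : Fin k} (h : j' ≤ j) :
    colWeight A j' ≤ prefixCount A j :=
  card_le_card fun i hi => by
    simp only [mem_filter, mem_univ, true_and] at hi ⊢
    exact ⟨j', h, hi⟩

def stairMatrix (n : ℕ) (w : Fin k → ℕ) : Fin n → Fin k → Bool :=
  fun i j => decide (i.val < w j)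

lemma colWeight_stairMatrix {n : ℕ} {w : Fin k → ℕ} {j : Fin k} (h : w j ≤ n) :
    colWeight (stairMatrix n w) j = w j := by
  simp [colWeight, stairMatrix, Fin.card_filter_val_lt, h]

lemma prefixCount_stairMatrix {n : ℕ} {w : Fin k → ℕ} {j : Fin k} (h : (Iic j).sup w ≤ n) :
    prefixCount (stairMatrix n w) j = (Iic j).sup w := by
  have hrows : ∀ i : Fin n, (∃ j' ≤ j, stairMatrix n w i j' = true) ↔ i.val < (Iic j).sup w := by
    simp [stairMatrix]
  simp only [prefixCount, hrows, Fin.card_filter_val_lt, h, min_eq_right]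

theorem totalDelay_stairMatrix_le {n : ℕ} {d : Fin k → ℝ} (hd0 : ∀ j, 0 ≤ d j)
    (hdanti : Antitone d) {w : Fin k → ℕ} (hn : ∀ j, w j ≤ n) (A : Fin m → Fin k → Bool)
    (hA : ∀ j, w j ≤ colWeight A j) :
    totalDelay d (stairMatrix n w) ≤ totalDelay d A := by
  rw [totalDelay_eq_sum_prefixCount_mul hd0 hdanti, totalDelay_eq_sum_prefixCount_mul hd0 hdanti]
  gcongr with j
  · exact delayGap_nonneg hd0 hdanti j
  · rw [prefixCount_stairMatrix (Finset.sup_le fun j _ => hn j)]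
    exact Finset.sup_le fun j' hj' => (hA j').trans (colWeight_le_prefixCount A (mem_Iic.1 hj'))

end

theorem stmt2_general (m k : ℕ)
    (d : Fin k → ℝ) (hd0 : ∀ j, 0 ≤ d j) (hdanti : Antitone d)
    (w : Fin k → ℕ)
    (A : Fin m → Fin k → Bool)
    (hA : ∀ j, w j ≤ colWeight A j) :
    (∀ j, w j ≤
        colWeight (fun (i : Fin (Finset.univ.sup w)) (j : Fin k) => decide (i.val < w j)) j)
    ∧ totalDelay d (fun (i : Fin (Finset.univ.sup w)) (j : Fin k) => decide (i.val < w j))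
        ≤ totalDelay d A := by
  have hw : ∀ j, w j ≤ univ.sup w := fun j => le_sup (mem_univ j)
  exact ⟨fun j => (colWeight_stairMatrix (hw j)).ge, totalDelay_stairMatrix_le hd0 hdanti hw A hA⟩

/-- if every column `j` of the binary matrix `A` has at least `w j`
ones, then the total delay of `A` is at least that of the canonical matrix `A*`;
consequently (since `A*` itself has at least `w j` ones in each column, and `m`
and `A` are universally quantified), `A*` achieves the minimum total delay among
all admissible assignment matrices with any number of rows. -/
theorem stmt2 (m k : ℕ) (hm : 1 ≤ m) (hk : 1 ≤ k)
    (d : Fin k → ℝ) (hd0 : ∀ j, 0 ≤ d j) (hdanti : Antitone d)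
    (w : Fin k → ℕ) (hw : ∃ j, w j ≠ 0)
    (A : Fin m → Fin k → Bool)
    (hA : ∀ j, w j ≤ colWeight A j) :
    (∀ j, w j ≤
        colWeight (fun (i : Fin (Finset.univ.sup w)) (j : Fin k) => decide (i.val < w j)) j)
    ∧ totalDelay d (fun (i : Fin (Finset.univ.sup w)) (j : Fin k) => decide (i.val < w j))
        ≤ totalDelay d A :=
  stmt2_general m k d hd0 hdanti w A hA
end

section
/- Let m, k ≥ 1, let d_1 ≥ d_2 ≥ ... ≥ d_k ≥ 0 be real delays, and let w_1, ..., w_k be natural numbers, not all zero. Then the minimum of D_T(A) over all binary matrices A (with any number m of rows) whose j-th column contains at least w_j ones for every j ∈ {1,...,k} equals Σ_{j=1}^k d_j · max{0, w_j − max{w_{j'} : 0 ≤ j' < j}}, where by convention w_0 = 0. -/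
open Finset

/-!
Let `c t = max {w j | j < t}` and let `r t` be the number of rows of `A` having a one among
the first `t` columns. Grouping the rows by the position of their first one gives
`D_T(A) = ∑ j, d j * (r (j + 1) - r j)`, while the claimed value is
`∑ j, d j * (c (j + 1) - c j)`. Every column `j < t` lies inside the rows counted by `r t`,
so `c ≤ r`, and summation by parts against the antitone, nonnegative `d` turns this into
the lower bound. The matrix whose `j`-th column has its ones in the first `w j` rows has
`r = c`.
-/

section SummationByParts

variable {R : Type*} [CommRing R] [LinearOrder R] [IsStrictOrderedRing R]

theorem Antitone.sum_range_mul_sub_add_le {D g h : ℕ → R} (hD : Antitone D)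
    (hgh : ∀ t, g t ≤ h t) (h0 : g 0 = h 0) (n : ℕ) :
    ∑ j ∈ range n, D j * (g (j + 1) - g j) + D n * (h n - g n) ≤
      ∑ j ∈ range n, D j * (h (j + 1) - h j) := by
  induction n with
  | zero => simp [h0]
  | succ n ih =>
    rw [sum_range_succ, sum_range_succ]
    have := mul_le_mul_of_nonneg_right (hD n.le_succ) (sub_nonneg.2 (hgh (n + 1)))
    linarith

theorem Antitone.sum_fin_mul_sub_le {k : ℕ} {d : Fin k → R} (hd0 : ∀ j, 0 ≤ d j)
    (hd : Antitone d) {g h : ℕ → R} (hgh : ∀ t, g t ≤ h t) (h0 : g 0 = h 0) :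
    ∑ j : Fin k, d j * (g (j + 1) - g j) ≤ ∑ j : Fin k, d j * (h (j + 1) - h j) := by
  -- `d ≥ 0` keeps the zero extension antitone, and the extension kills the boundary term at `k`.
  set D : ℕ → R := fun n => if hn : n < k then d ⟨n, hn⟩ else 0 with hD_def
  have hD : Antitone D := by
    intro a b hab
    simp only [hD_def]
    split_ifs with hb ha ha
    · exact hd (Fin.mk_le_mk.2 hab)
    · omega
    · exact hd0 _
    · rfl
  have hdD : ∀ j : Fin k, d j = D j := fun j => by simp [hD_def]
  simp_rw [hdD, Fin.sum_univ_eq_sum_range (fun n => D n * (g (n + 1) - g n)),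
    Fin.sum_univ_eq_sum_range (fun n => D n * (h (n + 1) - h n))]
  simpa [hD_def] using hD.sum_range_mul_sub_add_le hgh h0 k

end SummationByParts

theorem Finset.fold_max_eq_of_antitone {α β : Type*} [LinearOrder α] [LinearOrder β]
    {f : α → β} (hf : Antitone f) {s : Finset α} (hs : s.Nonempty) {b : β}
    (hb : b ≤ f (s.min' hs)) : s.fold max b f = f (s.min' hs) :=
  le_antisymm ((fold_max_le _).2 ⟨hb, fun _ hx => hf (s.min'_le _ hx)⟩)
    ((le_fold_max _).2 (Or.inr ⟨_, s.min'_mem hs, le_rfl⟩))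

def coveredRows {m k : ℕ} (A : Fin m → Fin k → Bool) (t : ℕ) : Finset (Fin m) :=
  univ.filter fun i => ∃ j : Fin k, j.val < t ∧ A i j = true

theorem rowDelay_eq_sum {m k : ℕ} {d : Fin k → ℝ} (hd0 : ∀ j, 0 ≤ d j) (hd : Antitone d)
    (A : Fin m → Fin k → Bool) (i : Fin m) :
    rowDelay d A i = ∑ j : Fin k, d j *
      ((if i ∈ coveredRows A (j + 1) then 1 else 0) -
        if i ∈ coveredRows A j then 1 else 0) := by
  unfold rowDelay
  set S := univ.filter fun j => A i j = true with hS
  have hcov : ∀ t, i ∈ coveredRows A t ↔ ∃ j ∈ S, j.val < t := fun t => by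
    simp [coveredRows, hS, and_comm]
  rcases S.eq_empty_or_nonempty with hempty | hne
  · simp [hcov, hempty]
  · rw [fold_max_eq_of_antitone hd hne (hd0 _)]
    set a := S.min' hne
    have hcov' : ∀ t, i ∈ coveredRows A t ↔ a.val < t := fun t =>
      (hcov t).trans ⟨fun ⟨j, hj, hjt⟩ => lt_of_le_of_lt (S.min'_le j hj) hjt,
        fun ht => ⟨a, S.min'_mem hne, ht⟩⟩
    have hjump : ∀ j : Fin k,
        ((if a.val < j.val + 1 then 1 else 0) - (if a.val < j.val then 1 else 0) : ℝ) =
          if a = j then 1 else 0 := fun j => by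
      simp only [Fin.ext_iff]
      split_ifs <;> first | omega | norm_num
    simp only [hcov', hjump]
    simp

theorem totalDelay_eq_sum {m k : ℕ} {d : Fin k → ℝ} (hd0 : ∀ j, 0 ≤ d j) (hd : Antitone d)
    (A : Fin m → Fin k → Bool) :
    totalDelay d A =
      ∑ j : Fin k, d j * ((#(coveredRows A (j + 1)) : ℝ) - #(coveredRows A j)) := by
  unfold totalDelay
  simp_rw [rowDelay_eq_sum hd0 hd, mul_sub, sum_sub_distrib]
  rw [sum_comm, sum_comm (f := fun i j => d j * if i ∈ coveredRows A j then 1 else 0),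
    ← sum_sub_distrib]
  simp [mul_comm]

def prefixMax {k : ℕ} (w : Fin k → ℕ) (t : ℕ) : ℕ :=
  (univ.filter fun j : Fin k => j.val < t).sup w

theorem prefixMax_val_add_one {k : ℕ} (w : Fin k → ℕ) (j : Fin k) :
    prefixMax w (j + 1) = max (w j) (prefixMax w j) := by
  have : (univ.filter fun j' : Fin k => j'.val < j + 1) =
      insert j (univ.filter fun j' : Fin k => j'.val < j) := by
    ext j'
    simp [le_iff_eq_or_lt, Fin.val_eq_val]
  rw [prefixMax, this, sup_insert]
  rfl

theorem natCast_sub_sup_lt_eq_prefixMax_sub {k : ℕ} (w : Fin k → ℕ) (j : Fin k) :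
    ((w j - (univ.filter fun j' => j' < j).sup w : ℕ) : ℝ) =
      prefixMax w (j + 1) - prefixMax w j := by
  rw [prefixMax_val_add_one, ← Nat.sub_add_eq_max]
  change ((w j - prefixMax w j : ℕ) : ℝ) = _
  push_cast
  ring

theorem prefixMax_le_card_coveredRows {m k : ℕ} {w : Fin k → ℕ} {A : Fin m → Fin k → Bool}
    (hA : ∀ j, w j ≤ colWeight A j) (t : ℕ) : prefixMax w t ≤ #(coveredRows A t) :=
  Finset.sup_le fun j hj => (hA j).trans <| card_le_card fun i hi => by
    simp only [coveredRows, mem_filter, mem_univ, true_and] at hi hj ⊢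
    exact ⟨j, hj, hi⟩

def stackedMatrix {k : ℕ} (w : Fin k → ℕ) : Fin (univ.sup w) → Fin k → Bool :=
  fun i j => decide (i.val < w j)

theorem colWeight_stackedMatrix {k : ℕ} (w : Fin k → ℕ) (j : Fin k) :
    colWeight (stackedMatrix w) j = w j := by
  simp [colWeight, stackedMatrix, Fin.card_filter_val_lt, le_sup (mem_univ j)]

theorem card_coveredRows_stackedMatrix {k : ℕ} (w : Fin k → ℕ) (t : ℕ) :
    #(coveredRows (stackedMatrix w) t) = prefixMax w t := by
  have : coveredRows (stackedMatrix w) t = univ.filter fun i => i.val < prefixMax w t := by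
    ext i
    simp [coveredRows, stackedMatrix, prefixMax, Finset.lt_sup_iff]
  rw [this, Fin.card_filter_val_lt, min_eq_right (sup_mono (filter_subset _ _))]

theorem stmt3_general (k : ℕ)
    (d : Fin k → ℝ) (hd0 : ∀ j, 0 ≤ d j) (hdanti : Antitone d)
    (w : Fin k → ℕ) (hw : ∃ j, w j ≠ 0) :
    IsLeast
      {x : ℝ | ∃ (m : ℕ) (_ : 1 ≤ m) (A : Fin m → Fin k → Bool),
        (∀ j, w j ≤ colWeight A j) ∧ x = totalDelay d A}
      (∑ j : Fin k,
        d j * ((w j - (Finset.univ.filter (fun j' => j' < j)).sup w : ℕ) : ℝ)) := by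
  simp_rw [natCast_sub_sup_lt_eq_prefixMax_sub]
  refine ⟨⟨univ.sup w, ?_, stackedMatrix w, fun j => (colWeight_stackedMatrix w j).ge, ?_⟩,
    ?_⟩
  · obtain ⟨j, hj⟩ := hw
    exact (Nat.one_le_iff_ne_zero.2 hj).trans (le_sup (mem_univ j))
  · simp [totalDelay_eq_sum hd0 hdanti, card_coveredRows_stackedMatrix]
  · rintro _ ⟨m, -, A, hA, rfl⟩
    rw [totalDelay_eq_sum hd0 hdanti]
    exact hdanti.sum_fin_mul_sub_le (g := fun t => (prefixMax w t : ℝ))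
      (h := fun t => (#(coveredRows A t) : ℝ)) hd0
      (fun t => mod_cast prefixMax_le_card_coveredRows hA t) (by simp [prefixMax, coveredRows])

/-- the minimum of the total delay over all binary matrices (with any
number `m ≥ 1` of rows) whose `j`-th column contains at least `w j` ones equals
`∑ j, d j * max{0, w j - max{w j' : j' < j}}` (empty max = 0, i.e. `w 0 = 0`). -/
theorem stmt3 (k : ℕ) (hk : 1 ≤ k)
    (d : Fin k → ℝ) (hd0 : ∀ j, 0 ≤ d j) (hdanti : Antitone d)
    (w : Fin k → ℕ) (hw : ∃ j, w j ≠ 0) :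
    IsLeast
      {x : ℝ | ∃ (m : ℕ) (_ : 1 ≤ m) (A : Fin m → Fin k → Bool),
        (∀ j, w j ≤ colWeight A j) ∧ x = totalDelay d A}
      (∑ j : Fin k,
        d j * ((w j - (Finset.univ.filter (fun j' => j' < j)).sup w : ℕ) : ℝ)) :=
  stmt3_general k d hd0 hdanti w hw
end
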